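/- Let B be a prime Banach algebra over ℝ, let H₁ and H₂ be non-empty open subsets of B, let d : B → B be a non-injective derivation, and let F : B → B be a continuous generalized derivation associated with d. Suppose that for every (x, y) ∈ H₁ × H₂ there exist positive integers p = p(x,y) ≥ 1 and q = q(x,y) ≥ 1 such that F(xᵖyᵠ) + xᵖ∘yᵠ ∈ Z(B). Then B is commutative or d(Z(B)) = {0}. -/

import Mathlib

/-!
For fixed exponents `(p, q)` the set of pairs `(x, y)` with `F(xᵖyᵠ) + xᵖ ∘ yᵠ` central is
closed, and these countably many sets cover the open set `H₁ × H₂`; by Baire one of them has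
interior. Being continuous and additive, `F` is `ℝ`-linear, so `(x, y) ↦ [F(xᵖyᵠ) + xᵖ ∘ yᵠ, b]`
is analytic, and the identity principle makes it vanish everywhere for that `(p, q)`.

Taking `x = 1` and then `y z` with `z` central shows that `yᵠ d(zᵠ)` is central for every `y`.
In a prime ring a nonzero central element is not a zero divisor. So either `d(zᵠ) ≠ 0` and every
`q`-th power is central, which in a real algebra forces commutativity (compare the coefficients of
`t` in `(t + x)ᵠ`), or `0 = d(zᵠ) = q zᵠ⁻¹ d(z)`, which forces `d(z) = 0`.
-/

open Set Polynomial

def IsPrimeRing (R : Type*) [Ring R] : Prop :=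
  ∀ x y : R, (∀ z : R, x * z * y = 0) → x = 0 ∨ y = 0

section Ring

variable {R : Type*} [Ring R]

theorem IsPrimeRing.eq_zero_or_eq_zero_of_mul_eq_zero_of_mem_center (hR : IsPrimeRing R)
    {a c : R} (hc : c ∈ Subring.center R) (h : a * c = 0) : a = 0 ∨ c = 0 :=
  hR a c fun z => by rw [mul_assoc, Subring.mem_center_iff.1 hc z, ← mul_assoc, h, zero_mul]

theorem IsPrimeRing.eq_zero_of_pow_eq_zero_of_mem_center (hR : IsPrimeRing R) {z : R}
    (hz : z ∈ Subring.center R) : ∀ {n : ℕ}, z ^ n = 0 → z = 0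
  | 0, h => by simpa using congrArg (z * ·) h
  | n + 1, h =>
    (hR.eq_zero_or_eq_zero_of_mul_eq_zero_of_mem_center hz (pow_succ z n ▸ h)).elim
      (hR.eq_zero_of_pow_eq_zero_of_mem_center hz) id

theorem IsPrimeRing.mem_center_of_mul_mem_center (hR : IsPrimeRing R) {a c : R}
    (hc : c ∈ Subring.center R) (hc0 : c ≠ 0) (hac : a * c ∈ Subring.center R) :
    a ∈ Subring.center R := by
  refine Subring.mem_center_iff.2 fun b => sub_eq_zero.1 ?_
  have hcomm : (b * a - a * b) * c = 0 := by
    rw [sub_mul, mul_assoc, mul_assoc, Subring.mem_center_iff.1 hc b, ← mul_assoc a c b,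
      Subring.mem_center_iff.1 hac b, sub_self]
  exact (hR.eq_zero_or_eq_zero_of_mul_eq_zero_of_mem_center hc hcomm).resolve_right hc0

theorem map_zero_of_leibniz {d : R → R} (hd : ∀ x y, d (x * y) = d x * y + x * d y) :
    d 0 = 0 := by
  simpa using hd 0 0

theorem map_mem_center_of_leibniz {d : R → R} (hd : ∀ x y, d (x * y) = d x * y + x * d y)
    {z : R} (hz : z ∈ Subring.center R) : d z ∈ Subring.center R := by
  refine Subring.mem_center_iff.2 fun b => ?_
  have h := hd b z
  rw [Subring.mem_center_iff.1 hz b, hd z b, Subring.mem_center_iff.1 hz (d b), add_comm] at h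
  exact (add_left_cancel h).symm

theorem map_pow_succ_of_leibniz {d : R → R} (hd : ∀ x y, d (x * y) = d x * y + x * d y)
    {z : R} (hz : Commute z (d z)) (n : ℕ) : d (z ^ (n + 1)) = (n + 1) • (z ^ n * d z) := by
  induction n with
  | zero => simp
  | succ n ih =>
    rw [pow_succ, hd, ih, smul_mul_assoc, mul_assoc, ← hz.eq, ← mul_assoc, ← pow_succ]
    exact (succ_nsmul _ _).symm

theorem pow_mul_map_pow_mem_center {F d : R → R}
    (hF : ∀ x y, F (x * y) = F x * y + x * d y) {q : ℕ}
    (h : ∀ y, F (y ^ q) + (y ^ q + y ^ q) ∈ Subring.center R) {z : R}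
    (hz : z ∈ Subring.center R) (y : R) : y ^ q * d (z ^ q) ∈ Subring.center R := by
  have hyz : F ((y * z) ^ q) + ((y * z) ^ q + (y * z) ^ q)
      = (F (y ^ q) + (y ^ q + y ^ q)) * z ^ q + y ^ q * d (z ^ q) := by
    rw [Commute.mul_pow (Subring.mem_center_iff.1 hz y), hF]
    noncomm_ring
  simpa [hyz] using sub_mem (h (y * z)) (mul_mem (h y) (pow_mem hz q))

end Ring

theorem eq_zero_of_forall_sum_pow_smul_eq_zero {𝕜 V : Type*} [Field 𝕜] [Infinite 𝕜]
    [AddCommGroup V] [Module 𝕜 V] {n : ℕ} {a : ℕ → V}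
    (h : ∀ t : 𝕜, ∑ k ∈ Finset.range n, t ^ k • a k = 0) {k : ℕ} (hk : k < n) : a k = 0 := by
  refine (Module.forall_dual_apply_eq_zero_iff 𝕜 (a k)).1 fun φ => ?_
  set P : 𝕜[X] := ∑ i ∈ Finset.range n, C (φ (a i)) * X ^ i
  have hP : P = 0 := Polynomial.funext fun t => by
    have ht := congrArg φ (h t)
    simp only [map_sum, map_smul, smul_eq_mul, map_zero] at ht
    simp only [P, eval_finsetSum, eval_mul, eval_C, eval_pow, eval_X, eval_zero, ← ht, mul_comm]
  simpa [P, coeff_X_pow, Finset.mem_range.2 hk] using congrArg (coeff · k) hP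

theorem mul_comm_of_forall_pow_mem_center {𝕜 A : Type*} [Field 𝕜] [CharZero 𝕜] [Ring A]
    [Algebra 𝕜 A] {q : ℕ} (hq : 0 < q) (h : ∀ x : A, x ^ q ∈ Subring.center A) (x y : A) :
    x * y = y * x := by
  obtain ⟨n, rfl⟩ : ∃ n, q = n + 1 := ⟨q - 1, by omega⟩
  set a : ℕ → A := fun k =>
    y * (x ^ (n + 1 - k) * (n + 1).choose k) - x ^ (n + 1 - k) * (n + 1).choose k * y
  have hsum (t : 𝕜) : ∑ k ∈ Finset.range (n + 2), t ^ k • a k = 0 := by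
    have hexp := (Algebra.commute_algebraMap_left t x).add_pow (n + 1)
    simp only [← map_pow, ← Algebra.smul_def, smul_mul_assoc] at hexp
    rw [← sub_eq_zero.2 (Subring.mem_center_iff.1 (h (algebraMap 𝕜 A t + x)) y), hexp,
      Finset.mul_sum, Finset.sum_mul, ← Finset.sum_sub_distrib]
    simp only [a, smul_sub, mul_smul_comm, smul_mul_assoc]
  have han := eq_zero_of_forall_sum_pow_smul_eq_zero hsum (k := n) (by omega)
  simp only [a, Nat.choose_succ_self_right, show n + 1 - n = 1 by omega, pow_one,
    ← nsmul_eq_mul', mul_smul_comm, smul_mul_assoc, ← smul_sub] at han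
  rw [← Nat.cast_smul_eq_nsmul 𝕜, smul_eq_zero, sub_eq_zero] at han
  exact (han.resolve_left (Nat.cast_ne_zero.2 n.succ_ne_zero)).symm

theorem IsPrimeRing.mul_comm_or_map_eq_zero_of_mem_center {𝕜 A : Type*} [Field 𝕜] [CharZero 𝕜]
    [Ring A] [Algebra 𝕜 A] (hA : IsPrimeRing A) {F d : A → A}
    (hd : ∀ x y, d (x * y) = d x * y + x * d y) (hF : ∀ x y, F (x * y) = F x * y + x * d y)
    {q : ℕ} (hq : 0 < q) (h : ∀ y, F (y ^ q) + (y ^ q + y ^ q) ∈ Subring.center A) :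
    (∀ x y : A, x * y = y * x) ∨ ∀ z ∈ Subring.center A, d z = 0 := by
  refine or_iff_not_imp_left.2 fun hcomm z hz => ?_
  obtain ⟨n, rfl⟩ : ∃ n, q = n + 1 := ⟨q - 1, by omega⟩
  have hdz := map_mem_center_of_leibniz hd hz
  have hw : d (z ^ (n + 1)) = 0 := by
    by_contra hw
    exact hcomm (mul_comm_of_forall_pow_mem_center (𝕜 := 𝕜) hq fun y =>
      hA.mem_center_of_mul_mem_center (map_mem_center_of_leibniz hd (pow_mem hz _)) hw
        (pow_mul_map_pow_mem_center hF h hz y))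
  rw [map_pow_succ_of_leibniz hd (Subring.mem_center_iff.1 hdz z), ← Nat.cast_smul_eq_nsmul 𝕜,
    smul_eq_zero] at hw
  rcases hA.eq_zero_or_eq_zero_of_mul_eq_zero_of_mem_center hdz
    (hw.resolve_left (Nat.cast_ne_zero.2 n.succ_ne_zero)) with hz0 | hdz0
  · rw [hA.eq_zero_of_pow_eq_zero_of_mem_center hz hz0, map_zero_of_leibniz hd]
  · exact hdz0

theorem exists_interior_nonempty_of_subset_iUnion {X ι : Type*} [TopologicalSpace X]
    [BaireSpace X] [Countable ι] {U : Set X} (hU : IsOpen U) (hne : U.Nonempty)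
    {A : ι → Set X} (hA : ∀ i, IsClosed (A i)) (hUA : U ⊆ ⋃ i, A i) :
    ∃ i, (interior (A i)).Nonempty := by
  by_contra! h
  exact not_isMeagre_of_isOpen hU hne
    ((isMeagre_iUnion fun i => ((hA i).isNowhereDense_iff.2 (h i)).isMeagre).mono hUA)

theorem AnalyticOnNhd.exists_forall_eq_of_forall_mem_exists {𝕜 E F ι κ : Type*}
    [NontriviallyNormedField 𝕜] [NormedAddCommGroup E] [NormedSpace 𝕜 E] [BaireSpace E]
    [PreconnectedSpace E] [NormedAddCommGroup F] [NormedSpace 𝕜 F] [Countable ι]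
    {f g : ι → κ → E → F} (hf : ∀ i j, AnalyticOnNhd 𝕜 (f i j) univ)
    (hg : ∀ i j, AnalyticOnNhd 𝕜 (g i j) univ) {U : Set E} (hU : IsOpen U) (hne : U.Nonempty)
    (h : ∀ x ∈ U, ∃ i, ∀ j, f i j x = g i j x) : ∃ i, ∀ j, f i j = g i j := by
  obtain ⟨i, x, hx⟩ := exists_interior_nonempty_of_subset_iUnion hU hne
    (A := fun i => ⋂ j, {x | f i j x = g i j x})
    (fun i => isClosed_iInter fun j => isClosed_eq (hf i j).continuous (hg i j).continuous)
    (fun x hx => by simpa using h x hx)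
  refine ⟨i, fun j => (hf i j).eq_of_eventuallyEq (hg i j) (z₀ := x) ?_⟩
  filter_upwards [isOpen_interior.mem_nhds hx] with y hy
  exact mem_iInter.1 (interior_subset hy) j

theorem prime_banach_of_genDer_mul_add_anticomm_general
    {B : Type*} [NormedRing B] [NormedAlgebra ℝ B] [CompleteSpace B]
    (hprime : ∀ x y : B, (∀ z : B, x * z * y = 0) → x = 0 ∨ y = 0)
    (H₁ H₂ : Set B) (hH₁ : H₁.Nonempty) (hH₂ : H₂.Nonempty)
    (hH₁o : IsOpen H₁) (hH₂o : IsOpen H₂)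
    (d : B → B)
    (hdmul : ∀ x y : B, d (x * y) = d x * y + x * d y)
    (F : B → B) (hFcont : Continuous F)
    (hFadd : ∀ x y : B, F (x + y) = F x + F y)
    (hFmul : ∀ x y : B, F (x * y) = F x * y + x * d y)
    (hmain : ∀ x ∈ H₁, ∀ y ∈ H₂, ∃ p q : ℕ, 0 < p ∧ 0 < q ∧
      ∀ b : B, (F (x ^ p * y ^ q) + (x ^ p * y ^ q + y ^ q * x ^ p)) * b
        = b * (F (x ^ p * y ^ q) + (x ^ p * y ^ q + y ^ q * x ^ p))) :
    (∀ x y : B, x * y = y * x) ∨ (∀ z : B, (∀ b : B, z * b = b * z) → d z = 0) := by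
  set c : ℕ → ℕ → B × B → B := fun p q xy =>
    F (xy.1 ^ p * xy.2 ^ q) + (xy.1 ^ p * xy.2 ^ q + xy.2 ^ q * xy.1 ^ p)
  have hc (p q : ℕ) : AnalyticOnNhd ℝ (c p q) univ := by
    let L : B →L[ℝ] B := (AddMonoidHom.mk' F hFadd).toRealLinearMap hFcont
    have hpq : AnalyticOnNhd ℝ (fun xy : B × B => xy.1 ^ p * xy.2 ^ q) univ :=
      (analyticOnNhd_fst.pow p).mul (analyticOnNhd_snd.pow q)
    exact ((L.analyticOnNhd univ).comp hpq (mapsTo_univ _ _)).add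
      (hpq.add ((analyticOnNhd_snd.pow q).mul (analyticOnNhd_fst.pow p)))
  obtain ⟨⟨_, q⟩, hpq⟩ := AnalyticOnNhd.exists_forall_eq_of_forall_mem_exists (ι := ℕ+ × ℕ+)
    (f := fun i b xy => c i.1 i.2 xy * b) (g := fun i b xy => b * c i.1 i.2 xy)
    (fun _ _ => (hc _ _).mul analyticOnNhd_const) (fun _ _ => analyticOnNhd_const.mul (hc _ _))
    (hH₁o.prod hH₂o) (hH₁.prod hH₂) fun xy hxy => by
      obtain ⟨p, q, hp, hq, h⟩ := hmain xy.1 hxy.1 xy.2 hxy.2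
      exact ⟨(⟨p, hp⟩, ⟨q, hq⟩), h⟩
  refine (IsPrimeRing.mul_comm_or_map_eq_zero_of_mem_center (𝕜 := ℝ) hprime hdmul hFmul q.pos
    fun y => Subring.mem_center_iff.2 fun b => ?_).imp_right
    fun h z hz => h z (Subring.mem_center_iff.2 fun b => (hz b).symm)
  simpa [c] using (congr_fun (hpq b) (1, y)).symm

/-- Theorem: a prime real Banach algebra with a continuous generalized derivation `F`
associated with a non-injective derivation `d` satisfying
`F(x^p y^q) + x^p ∘ y^q ∈ Z(B)` on a product of nonempty open sets is commutative
or `d` vanishes on the center. -/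
theorem prime_banach_of_genDer_mul_add_anticomm
    {B : Type*} [NormedRing B] [NormedAlgebra ℝ B] [CompleteSpace B]
    (hprime : ∀ x y : B, (∀ z : B, x * z * y = 0) → x = 0 ∨ y = 0)
    (H₁ H₂ : Set B) (hH₁ : H₁.Nonempty) (hH₂ : H₂.Nonempty)
    (hH₁o : IsOpen H₁) (hH₂o : IsOpen H₂)
    (d : B → B) (hdadd : ∀ x y : B, d (x + y) = d x + d y)
    (hdmul : ∀ x y : B, d (x * y) = d x * y + x * d y)
    (hdnoninj : ¬ Function.Injective d)
    (F : B → B) (hFcont : Continuous F)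
    (hFadd : ∀ x y : B, F (x + y) = F x + F y)
    (hFmul : ∀ x y : B, F (x * y) = F x * y + x * d y)
    (hmain : ∀ x ∈ H₁, ∀ y ∈ H₂, ∃ p q : ℕ, 0 < p ∧ 0 < q ∧
      ∀ b : B, (F (x ^ p * y ^ q) + (x ^ p * y ^ q + y ^ q * x ^ p)) * b
        = b * (F (x ^ p * y ^ q) + (x ^ p * y ^ q + y ^ q * x ^ p))) :
    (∀ x y : B, x * y = y * x) ∨ (∀ z : B, (∀ b : B, z * b = b * z) → d z = 0) :=
  prime_banach_of_genDer_mul_add_anticomm_general hprime H₁ H₂ hH₁ hH₂ hH₁o hH₂o d hdmul F hFcont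
    hFadd hFmul hmain
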